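/- The canonical encoding is prefix-free among encoded messages: for any lists μ₁ and μ₂ of Booleans, if encode(μ₁) is a prefix of encode(μ₂), then μ₁ = μ₂. (This expresses that a listening node can correctly detect the end of a transmitted message: the delimiter block (1,1) occurs at an even block boundary only at the very beginning and the very end of an encoded message.) -/
import Mathlib


/-- The canonical encoding of a binary message in the beeping model:
delimiter (1,1), then for each bit the block (1,0) if the bit is 1 and
(0,1) if the bit is 0, then the delimiter (1,1). Beeps are `true`,
silent rounds are `false`. -/
def encode (μ : List Bool) : List Bool :=
  [true, true] ++ (μ.flatMap fun a => if a then [true, false] else [false, true]) ++ [true, true]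

private lemma aux : ∀ μ₁ μ₂ : List Bool,
    ((μ₁.flatMap fun a => if a then [true, false] else [false, true]) ++ [true, true] <+:
     (μ₂.flatMap fun a => if a then [true, false] else [false, true]) ++ [true, true]) → μ₁ = μ₂ := by
  intro μ₁
  induction μ₁ with
  | nil =>
    intro μ₂ h
    cases μ₂ with
    | nil => rfl
    | cons b t =>
      exfalso
      cases b <;> simp [List.cons_prefix_cons] at h
  | cons a t ih =>
    intro μ₂ h
    cases μ₂ with
    | nil =>
      exfalso
      cases a <;> simp [List.cons_prefix_cons] at h
    | cons b t₂ =>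
      cases a <;> cases b <;> simp [List.cons_prefix_cons] at h ⊢ <;>
        exact ih t₂ (by simpa using h)

/-- The canonical encoding is prefix-free among encoded messages: if the
encoding of `μ₁` is a prefix of the encoding of `μ₂`, then `μ₁ = μ₂`. -/
theorem encode_prefix_free (μ₁ μ₂ : List Bool) (h : encode μ₁ <+: encode μ₂) : μ₁ = μ₂ := by
  apply aux
  obtain ⟨s, hs⟩ := h
  simp only [encode, List.append_assoc] at hs
  exact ⟨s, by simpa using hs⟩
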